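/- For every μ > 0 and every r ∈ ℤ with r + ⌊μ⌋ ≥ 0, there exists a function h : ℤ → [0,∞) with Σ_{l ∈ ℤ} h(l) ≤ 3 such that for all l ∈ ℤ, |(l − ⟨μ⟩)·ĝ_{μ,r}(l)| ≤ h(l) + Po(μ){r + ⌊μ⌋}. -/

import Mathlib

/-!
For `g = g_{μ,s}` the Stein–Chen equation reads
`(j - μ) g(j) = μ (g(j+1) - g(j)) - 1[j = s] + Po(μ){s}`, so it suffices that the total variation
of `μ g` on `ℕ` is at most `2`. Starting from `g(0) = 0`, `g` decreases on `[0, s]`, jumps up at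
`s`, and decreases on `[s+1, ∞)` while staying nonnegative there, so its variation is at most twice
the jump. Below `s` this follows from the recursion alone, which also gives
`(s - μ) g(s) ≤ Po(μ){s}`, i.e. `μ` times the jump is at most `1`. Above `s` it follows from the
closed form `μ^{j+1} g(j+1) / j! = Po(μ){s} · Σ_{k > j} μ^k / k!` and the tail comparison
`j · Σ_{k > j} μ^k / k! ≤ μ · Σ_{k ≥ j} μ^k / k!`. Finally `ĝ_{μ,r}` is `g_{μ,r+⌊μ⌋}` shifted by
`⌊μ⌋`, and `l - ⟨μ⟩ = (l + ⌊μ⌋) - μ`.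
-/

noncomputable section

/-- The Stein–Chen solution `g_{μ,s}` for the one-point set `{s}`: the unique
function with `g 0 = 0` and `μ·g(j+1) − j·g(j) = 1[j=s] − e^{−μ} μ^s / s!`. -/
def steinChen (μ : ℝ) (s : ℕ) : ℕ → ℝ
  | 0 => 0
  | j + 1 => ((j : ℝ) * steinChen μ s j + (if j = s then 1 else 0)
      - Real.exp (-μ) * μ ^ s / (Nat.factorial s : ℝ)) / μ

/-- The translated Stein–Chen solution `ĝ_{μ,r}`. -/
def ghat (μ : ℝ) (r : ℤ) (l : ℤ) : ℝ :=
  if l < -⌊μ⌋ then 0 else steinChen μ (r + ⌊μ⌋).toNat (l + ⌊μ⌋).toNat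

open Finset
open scoped Nat

def expTerm (μ : ℝ) (k : ℕ) : ℝ := μ ^ k / k !

def expTail (μ : ℝ) (n : ℕ) : ℝ := ∑' k, expTerm μ (k + n)

def poissonProb (μ : ℝ) (s : ℕ) : ℝ := Real.exp (-μ) * μ ^ s / s !

section Exponential

variable {μ : ℝ}

lemma expTerm_nonneg (hμ : 0 ≤ μ) (k : ℕ) : 0 ≤ expTerm μ k := by
  unfold expTerm; positivity

lemma expTerm_pos (hμ : 0 < μ) (k : ℕ) : 0 < expTerm μ k := by
  unfold expTerm; positivity

lemma succ_mul_expTerm_succ (k : ℕ) : (k + 1) * expTerm μ (k + 1) = μ * expTerm μ k := by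
  simp only [expTerm, Nat.factorial_succ, Nat.cast_mul, Nat.cast_succ]
  field_simp
  ring

lemma hasSum_expTerm (μ : ℝ) : HasSum (expTerm μ) (Real.exp μ) := by
  rw [Real.exp_eq_exp_ℝ]
  exact NormedSpace.expSeries_div_hasSum_exp μ

lemma summable_expTerm_add (μ : ℝ) (n : ℕ) : Summable fun k ↦ expTerm μ (k + n) :=
  (summable_nat_add_iff n).mpr (hasSum_expTerm μ).summable

lemma sum_range_add_expTail (μ : ℝ) (n : ℕ) :
    ∑ k ∈ range n, expTerm μ k + expTail μ n = Real.exp μ :=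
  ((hasSum_expTerm μ).summable.sum_add_tsum_nat_add n).trans (hasSum_expTerm μ).tsum_eq

lemma expTail_nonneg (hμ : 0 ≤ μ) (n : ℕ) : 0 ≤ expTail μ n :=
  tsum_nonneg fun k ↦ expTerm_nonneg hμ (k + n)

lemma mul_expTail_succ_le (hμ : 0 ≤ μ) (n : ℕ) :
    n * expTail μ (n + 1) ≤ μ * expTail μ n := by
  rw [expTail, expTail, ← tsum_mul_left, ← tsum_mul_left]
  refine Summable.tsum_le_tsum (fun k ↦ ?_) ((summable_expTerm_add μ _).mul_left _)
    ((summable_expTerm_add μ _).mul_left _)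
  rw [← succ_mul_expTerm_succ, ← add_assoc]
  gcongr
  · exact expTerm_nonneg hμ _
  · push_cast; linarith [(k.cast_nonneg : (0 : ℝ) ≤ k)]

lemma poissonProb_pos (hμ : 0 < μ) (s : ℕ) : 0 < poissonProb μ s := by
  unfold poissonProb; positivity

lemma poissonProb_mul_exp (s : ℕ) : poissonProb μ s * Real.exp μ = expTerm μ s := by
  rw [poissonProb, expTerm, Real.exp_neg]
  field_simp

end Exponential

lemma sum_range_abs_sub_eq {f : ℕ → ℝ} {s n : ℕ} (hf : ∀ j ≠ s, f (j + 1) ≤ f j) (hsn : s < n) :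
    ∑ j ∈ range n, |f (j + 1) - f j| = f 0 - f n + (|f (s + 1) - f s| + (f (s + 1) - f s)) := by
  have hsplit : ∀ j, |f (j + 1) - f j| = (f j - f (j + 1))
      + if j = s then |f (s + 1) - f s| + (f (s + 1) - f s) else 0 := by
    intro j
    split_ifs with hj
    · subst hj; ring
    · rw [abs_of_nonpos (by linarith [hf j hj])]; ring
  rw [sum_congr rfl fun j _ ↦ hsplit j, sum_add_distrib, sum_range_sub', sum_ite_eq',
    if_pos (mem_range.mpr hsn)]

section SteinChen

variable {μ : ℝ} {s : ℕ}

lemma mul_steinChen_succ (hμ : μ ≠ 0) (j : ℕ) :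
    μ * steinChen μ s (j + 1)
      = j * steinChen μ s j + (if j = s then 1 else 0) - poissonProb μ s := by
  rw [steinChen, poissonProb]
  field_simp

lemma sub_mul_steinChen_eq (hμ : μ ≠ 0) (j : ℕ) :
    (j - μ) * steinChen μ s j
      = μ * (steinChen μ s (j + 1) - steinChen μ s j) - (if j = s then 1 else 0)
        + poissonProb μ s := by
  rw [mul_sub, mul_steinChen_succ hμ]
  ring

lemma steinChen_nonpos (hμ : 0 < μ) {j : ℕ} (hj : j ≤ s) : steinChen μ s j ≤ 0 := by
  induction j with
  | zero => rfl
  | succ j ih =>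
    have hstep := mul_steinChen_succ (s := s) hμ.ne' j
    rw [if_neg (by omega)] at hstep
    refine nonpos_of_mul_nonpos_right ?_ hμ
    linarith [mul_nonpos_of_nonneg_of_nonpos j.cast_nonneg (ih (by omega)), poissonProb_pos hμ s]

/-- For `j < s`, `(j - μ) g(j) - Po(μ){s} = μ (g(j+1) - g(j))` and
`(j + 1 - μ) g(j+1) - Po(μ){s} = j (g(j+1) - g(j)) + g(j+1)`, so the bound propagates. -/
lemma sub_mul_steinChen_le (hμ : 0 < μ) {j : ℕ} (hj : j ≤ s) :
    (j - μ) * steinChen μ s j ≤ poissonProb μ s := by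
  induction j with
  | zero => simpa [steinChen] using (poissonProb_pos hμ s).le
  | succ j ih =>
    have hcur := mul_steinChen_succ (s := s) hμ.ne' j
    rw [if_neg (by omega)] at hcur
    have hdecr : steinChen μ s (j + 1) - steinChen μ s j ≤ 0 := by
      refine nonpos_of_mul_nonpos_right ?_ hμ
      linarith [ih (by omega)]
    have hidentity : ((j + 1 : ℕ) - μ) * steinChen μ s (j + 1)
        = j * (steinChen μ s (j + 1) - steinChen μ s j) + steinChen μ s (j + 1)
          + poissonProb μ s := by
      push_cast
      linear_combination -hcur
    rw [hidentity]
    linarith [mul_nonpos_of_nonneg_of_nonpos j.cast_nonneg hdecr, steinChen_nonpos hμ hj]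

lemma steinChen_succ_le_of_lt (hμ : 0 < μ) {j : ℕ} (hj : j < s) :
    steinChen μ s (j + 1) ≤ steinChen μ s j := by
  have h := sub_mul_steinChen_eq (s := s) hμ.ne' j
  rw [if_neg hj.ne] at h
  have hincr : μ * (steinChen μ s (j + 1) - steinChen μ s j) ≤ 0 := by
    linarith [sub_mul_steinChen_le hμ hj.le]
  linarith [nonpos_of_mul_nonpos_right hincr hμ]

lemma mul_steinChen_jump_le_one (hμ : 0 < μ) :
    μ * (steinChen μ s (s + 1) - steinChen μ s s) ≤ 1 := by
  have h := sub_mul_steinChen_eq (s := s) hμ.ne' s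
  rw [if_pos rfl] at h
  linarith [sub_mul_steinChen_le (s := s) hμ le_rfl, poissonProb_pos hμ s]

lemma mul_expTerm_mul_steinChen_succ (hμ : μ ≠ 0) (j : ℕ) :
    μ * expTerm μ j * steinChen μ s (j + 1)
      = (if s ≤ j then expTerm μ s else 0)
        - poissonProb μ s * ∑ k ∈ range (j + 1), expTerm μ k := by
  induction j with
  | zero =>
    rw [mul_comm μ, mul_assoc, mul_steinChen_succ hμ]
    rcases Nat.eq_zero_or_pos s with rfl | hs
    · simp [expTerm]
    · simp [expTerm, hs.ne, hs.not_ge]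
  | succ j ih =>
    have hrec : μ * expTerm μ (j + 1) * steinChen μ s (j + 2)
        = μ * expTerm μ j * steinChen μ s (j + 1)
          + expTerm μ (j + 1) * ((if j + 1 = s then 1 else 0) - poissonProb μ s) := by
      rw [mul_comm μ, mul_assoc, mul_steinChen_succ hμ, ← succ_mul_expTerm_succ]
      push_cast
      ring
    rw [hrec, ih, sum_range_succ _ (j + 1)]
    rcases lt_trichotomy s (j + 1) with hs | rfl | hs
    · simp [Nat.le_of_lt_succ hs, hs.le, hs.ne']
      ring
    · simp
      ring
    · simp [show ¬ s ≤ j by omega, show ¬ s ≤ j + 1 by omega, hs.ne]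
      ring

lemma mul_expTerm_mul_steinChen_succ_of_le (hμ : μ ≠ 0) {j : ℕ} (hj : s ≤ j) :
    μ * expTerm μ j * steinChen μ s (j + 1) = poissonProb μ s * expTail μ (j + 1) := by
  rw [mul_expTerm_mul_steinChen_succ hμ, if_pos hj, ← poissonProb_mul_exp,
    ← sum_range_add_expTail μ (j + 1)]
  ring

lemma steinChen_nonneg (hμ : 0 < μ) {j : ℕ} (hj : s < j) : 0 ≤ steinChen μ s j := by
  obtain ⟨i, rfl⟩ : ∃ i, j = i + 1 := Nat.exists_eq_add_one.mpr (by omega)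
  have h := mul_expTerm_mul_steinChen_succ_of_le hμ.ne' (Nat.le_of_lt_succ hj)
  have hpos : 0 < μ * expTerm μ i := mul_pos hμ (expTerm_pos hμ i)
  have hprod : 0 ≤ μ * expTerm μ i * steinChen μ s (i + 1) := by
    rw [h]; exact mul_nonneg (poissonProb_pos hμ s).le (expTail_nonneg hμ.le _)
  exact nonneg_of_mul_nonneg_right hprod hpos

lemma steinChen_succ_le_of_gt (hμ : 0 < μ) {j : ℕ} (hj : s < j) :
    steinChen μ s (j + 1) ≤ steinChen μ s j := by
  obtain ⟨i, rfl⟩ : ∃ i, j = i + 1 := Nat.exists_eq_add_one.mpr (by omega)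
  have hsi : s ≤ i := Nat.le_of_lt_succ hj
  have hcur := mul_expTerm_mul_steinChen_succ_of_le hμ.ne' hsi
  have hnext := mul_expTerm_mul_steinChen_succ_of_le hμ.ne' (hsi.trans i.le_succ)
  have hc : 0 < (i + 1) * (μ * expTerm μ (i + 1)) := by
    have := expTerm_pos hμ (i + 1); positivity
  refine le_of_mul_le_mul_left ?_ hc
  calc (i + 1) * (μ * expTerm μ (i + 1)) * steinChen μ s (i + 1 + 1)
      = poissonProb μ s * ((i + 1) * expTail μ (i + 1 + 1)) := by
        rw [mul_assoc, hnext]; ring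
    _ ≤ poissonProb μ s * (μ * expTail μ (i + 1)) :=
        mul_le_mul_of_nonneg_left (by exact_mod_cast mul_expTail_succ_le hμ.le (i + 1))
          (poissonProb_pos hμ s).le
    _ = (i + 1) * (μ * expTerm μ (i + 1)) * steinChen μ s (i + 1) := by
        rw [mul_left_comm, ← hcur, ← succ_mul_expTerm_succ]; ring

lemma steinChen_succ_le (hμ : 0 < μ) {j : ℕ} (hj : j ≠ s) :
    steinChen μ s (j + 1) ≤ steinChen μ s j :=
  hj.lt_or_gt.elim (steinChen_succ_le_of_lt hμ) (steinChen_succ_le_of_gt hμ)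

lemma sum_range_mul_abs_steinChen_sub_le (hμ : 0 < μ) (n : ℕ) :
    ∑ j ∈ range n, μ * |steinChen μ s (j + 1) - steinChen μ s j| ≤ 2 := by
  have hjump : 0 ≤ steinChen μ s (s + 1) - steinChen μ s s := by
    linarith [steinChen_nonneg hμ s.lt_succ_self, steinChen_nonpos hμ (le_refl s)]
  have hmono : ∑ j ∈ range n, |steinChen μ s (j + 1) - steinChen μ s j|
      ≤ ∑ j ∈ range (n + s + 1), |steinChen μ s (j + 1) - steinChen μ s j| :=
    sum_le_sum_of_subset_of_nonneg (range_mono (by omega)) fun _ _ _ ↦ abs_nonneg _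
  rw [sum_range_abs_sub_eq (n := n + s + 1) (fun j ↦ steinChen_succ_le hμ) (by omega),
    abs_of_nonneg hjump] at hmono
  have hend := steinChen_nonneg hμ (show s < n + s + 1 by omega)
  have hstart : steinChen μ s 0 = 0 := rfl
  have hvariation : ∑ j ∈ range n, |steinChen μ s (j + 1) - steinChen μ s j|
      ≤ 2 * (steinChen μ s (s + 1) - steinChen μ s s) := by
    linarith
  rw [← mul_sum]
  calc μ * ∑ j ∈ range n, |steinChen μ s (j + 1) - steinChen μ s j|
      ≤ μ * (2 * (steinChen μ s (s + 1) - steinChen μ s s)) := by gcongr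
    _ = 2 * (μ * (steinChen μ s (s + 1) - steinChen μ s s)) := by ring
    _ ≤ 2 := by linarith [mul_steinChen_jump_le_one (s := s) hμ]

def steinChenBound (μ : ℝ) (s j : ℕ) : ℝ :=
  μ * |steinChen μ s (j + 1) - steinChen μ s j| + if j = s then 1 else 0

lemma steinChenBound_nonneg (hμ : 0 ≤ μ) (j : ℕ) : 0 ≤ steinChenBound μ s j := by
  unfold steinChenBound; split_ifs <;> positivity

lemma sum_range_steinChenBound_le (hμ : 0 < μ) (n : ℕ) :
    ∑ j ∈ range n, steinChenBound μ s j ≤ 3 := by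
  have hind : ∑ j ∈ range n, (if j = s then (1 : ℝ) else 0) ≤ 1 := by
    rw [sum_ite_eq']; split_ifs <;> norm_num
  simp only [steinChenBound, sum_add_distrib]
  linarith [sum_range_mul_abs_steinChen_sub_le (s := s) hμ n]

lemma abs_sub_mul_steinChen_le (hμ : 0 < μ) (j : ℕ) :
    |(j - μ) * steinChen μ s j| ≤ steinChenBound μ s j + poissonProb μ s := by
  set Δ := steinChen μ s (j + 1) - steinChen μ s j
  have hΔ : |μ * Δ| = μ * |Δ| := by rw [abs_mul, abs_of_pos hμ]
  have hπ := poissonProb_pos hμ s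
  rw [sub_mul_steinChen_eq hμ.ne', steinChenBound, abs_le]
  split_ifs <;> constructor <;> linarith [neg_abs_le (μ * Δ), le_abs_self (μ * Δ)]

end SteinChen

lemma ghat_natCast_sub_floor (μ : ℝ) (r : ℤ) (n : ℕ) :
    ghat μ r (n - ⌊μ⌋) = steinChen μ (r + ⌊μ⌋).toNat n := by
  simp [ghat]

lemma exists_int_extend_of_sum_range_le (m : ℤ) {H : ℕ → ℝ} {c : ℝ} (hH : ∀ n, 0 ≤ H n)
    (hsum : ∀ n, ∑ j ∈ range n, H j ≤ c) :
    ∃ h : ℤ → ℝ, (∀ l, 0 ≤ h l) ∧ Summable h ∧ ∑' l, h l ≤ c ∧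
      (∀ n : ℕ, h (n - m) = H n) ∧ ∀ l < -m, h l = 0 := by
  have hshift : Function.Injective fun n : ℕ ↦ (n : ℤ) - m := fun a b hab ↦ by simpa using hab
  have hzero : ∀ l < -m, Function.extend (fun n : ℕ ↦ (n : ℤ) - m) H 0 l = 0 := fun l hl ↦
    Function.extend_apply' _ _ _ (by rintro ⟨n, rfl⟩; omega)
  refine ⟨Function.extend (fun n : ℕ ↦ (n : ℤ) - m) H 0, fun l ↦ ?_,
    (summable_extend_zero hshift).mpr (summable_of_sum_range_le hH hsum), ?_,
    hshift.extend_apply H 0, hzero⟩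
  · rcases lt_or_ge l (-m) with hl | hl
    · exact (hzero l hl).ge
    · obtain ⟨n, rfl⟩ : ∃ n : ℕ, l = n - m := ⟨(l + m).toNat, by omega⟩
      exact (hshift.extend_apply H 0 n).symm ▸ hH n
  · rw [tsum_extend_zero hshift]
    exact Real.tsum_le_of_sum_range_le hH hsum

theorem ghat_weighted_bound_general (μ : ℝ) (hμ : 0 < μ) (r : ℤ) :
    ∃ h : ℤ → ℝ, (∀ l : ℤ, 0 ≤ h l) ∧ Summable h ∧ (∑' l : ℤ, h l) ≤ 3 ∧
      ∀ l : ℤ, |((l : ℝ) - (μ - ⌊μ⌋)) * ghat μ r l|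
        ≤ h l + Real.exp (-μ) * μ ^ (r + ⌊μ⌋).toNat / (Nat.factorial (r + ⌊μ⌋).toNat : ℝ) := by
  set s := (r + ⌊μ⌋).toNat
  obtain ⟨h, hnonneg, hsummable, htsum, hshift, hzero⟩ := exists_int_extend_of_sum_range_le ⌊μ⌋
    (steinChenBound_nonneg (s := s) hμ.le) (sum_range_steinChenBound_le hμ)
  refine ⟨h, hnonneg, hsummable, htsum, fun l ↦ ?_⟩
  rcases lt_or_ge l (-⌊μ⌋) with hl | hl
  · rw [ghat, if_pos hl, hzero l hl, mul_zero, abs_zero, zero_add]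
    exact (poissonProb_pos hμ s).le
  · obtain ⟨n, rfl⟩ : ∃ n : ℕ, l = n - ⌊μ⌋ := ⟨(l + ⌊μ⌋).toNat, by omega⟩
    rw [hshift, ghat_natCast_sub_floor]
    convert abs_sub_mul_steinChen_le hμ n using 3
    · push_cast; ring
    · rfl

/-- There is a nonnegative `h` with `Σ_l h(l) ≤ 3` such that
`|(l − ⟨μ⟩)·ĝ_{μ,r}(l)| ≤ h(l) + Po(μ){r + ⌊μ⌋}` for all `l`. -/
theorem ghat_weighted_bound (μ : ℝ) (hμ : 0 < μ) (r : ℤ) (hr : 0 ≤ r + ⌊μ⌋) :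
    ∃ h : ℤ → ℝ, (∀ l : ℤ, 0 ≤ h l) ∧ Summable h ∧ (∑' l : ℤ, h l) ≤ 3 ∧
      ∀ l : ℤ, |((l : ℝ) - (μ - ⌊μ⌋)) * ghat μ r l|
        ≤ h l + Real.exp (-μ) * μ ^ (r + ⌊μ⌋).toNat / (Nat.factorial (r + ⌊μ⌋).toNat : ℝ) :=
  ghat_weighted_bound_general μ hμ r
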